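/- arXiv:1710.08080 — 2 statements merged into one kernel-verified Lean document; each statement's English description precedes it below -/
import Mathlib

section
/- For any positive semidefinite matrix X with operator norm ‖X‖ and any T > 0 and β ∈ (0,1), the operator inequality ∫_T^∞ t^β ( (1/t)·I − (tI + X)^{-1} ) dt ≤ ( ‖X‖ / ((1−β)·T^{1−β}) )·I holds. -/
/-!
Both sides are functions of `X` in the continuous functional calculus:
`t ^ β • resolventGap t X = f_t(X)` with `f_t(x) = t ^ β (1/t - 1/(t + x)) = t ^ β x / (t (t + x))`,
and the integral commutes with the calculus. So it suffices to bound the scalar integral at each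
eigenvalue `x ∈ [0, ‖X‖]`, which follows from `f_t(x) ≤ x t ^ (β - 2)` and
`∫_T^∞ t ^ (β - 2) dt = 1 / ((1 - β) T ^ (1 - β))`.
-/

open Matrix
open scoped ComplexOrder

attribute [local instance] Matrix.frobeniusNormedAddCommGroup Matrix.frobeniusNormedSpace

/-- `(1/t)·I − (tI + X)⁻¹`. -/
noncomputable def resolventGap {n : ℕ} (t : ℝ) (X : Matrix (Fin n) (Fin n) ℂ) :
    Matrix (Fin n) (Fin n) ℂ :=
  (1 / t : ℝ) • (1 : Matrix (Fin n) (Fin n) ℂ) - (t • (1 : Matrix (Fin n) (Fin n) ℂ) + X)⁻¹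

open MeasureTheory Set
open scoped MatrixOrder

section Scalar

variable {β t x : ℝ}

lemma rpow_mul_one_div_sub_nonneg (ht : 0 < t) (hx : 0 ≤ x) :
    0 ≤ t ^ β * (1 / t - 1 / (t + x)) := by
  have : 1 / (t + x) ≤ 1 / t := one_div_le_one_div_of_le ht (by linarith)
  exact mul_nonneg (Real.rpow_nonneg ht.le β) (sub_nonneg.mpr this)

lemma rpow_mul_one_div_sub_le (ht : 0 < t) (hx : 0 ≤ x) :
    t ^ β * (1 / t - 1 / (t + x)) ≤ x * t ^ (β - 2) := by
  have hgap : 1 / t - 1 / (t + x) = x / (t * (t + x)) := by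
    field_simp
    ring
  have hpow : t ^ (β - 2) = t ^ β / (t * t) := by
    rw [Real.rpow_sub ht, Real.rpow_two, sq]
  rw [hgap, hpow, mul_div_assoc', mul_div_assoc', mul_comm x]
  exact div_le_div_of_nonneg_left (by positivity) (by positivity) (by nlinarith)

variable {T : ℝ}

lemma integrableOn_rpow_mul_one_div_sub (hT : 0 < T) (hβ : β < 1) (hx : 0 ≤ x) :
    IntegrableOn (fun t : ℝ => t ^ β * (1 / t - 1 / (t + x))) (Ioi T) := by
  refine ((integrableOn_Ioi_rpow_of_lt (show β - 2 < -1 by linarith) hT).const_mul x).mono' ?_ ?_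
  · refine ContinuousOn.aestronglyMeasurable (fun t ht => ?_) measurableSet_Ioi
    have ht : 0 < t := hT.trans ht
    have ht0 : t ≠ 0 := ht.ne'
    have htx : t + x ≠ 0 := by positivity
    exact ContinuousAt.continuousWithinAt <| by
      fun_prop (disch := first | assumption | exact Or.inl ht0)
  · filter_upwards [ae_restrict_mem measurableSet_Ioi] with t ht
    have ht : 0 < t := hT.trans ht
    rw [Real.norm_of_nonneg (rpow_mul_one_div_sub_nonneg ht hx)]
    exact rpow_mul_one_div_sub_le ht hx

lemma setIntegral_rpow_mul_one_div_sub_le (hT : 0 < T) (hβ : β < 1) (hx : 0 ≤ x) :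
    ∫ t in Ioi T, t ^ β * (1 / t - 1 / (t + x)) ≤ x / ((1 - β) * T ^ (1 - β)) := by
  calc ∫ t in Ioi T, t ^ β * (1 / t - 1 / (t + x))
      ≤ ∫ t in Ioi T, x * t ^ (β - 2) :=
        setIntegral_mono_on (integrableOn_rpow_mul_one_div_sub hT hβ hx)
          ((integrableOn_Ioi_rpow_of_lt (show β - 2 < -1 by linarith) hT).const_mul x)
          measurableSet_Ioi
          fun t ht => rpow_mul_one_div_sub_le (hT.trans ht) hx
    _ = x / ((1 - β) * T ^ (1 - β)) := by
        rw [integral_const_mul, integral_Ioi_rpow_of_lt (show β - 2 < -1 by linarith) hT,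
          show β - 2 + 1 = -(1 - β) by ring, Real.rpow_neg hT.le]
        field_simp

end Scalar

section Spectrum

variable {m 𝕜 : Type*} [Fintype m] [DecidableEq m] [RCLike 𝕜]

lemma abs_le_norm_toEuclideanCLM_of_mem_spectrum {A : Matrix m m 𝕜} {x : ℝ}
    (hx : x ∈ spectrum ℝ A) : |x| ≤ ‖toEuclideanCLM (𝕜 := 𝕜) A‖ := by
  have hx𝕜 : (x : 𝕜) ∈ spectrum 𝕜 (toEuclideanCLM (𝕜 := 𝕜) A) := by
    rw [AlgEquiv.spectrum_eq]
    exact (spectrum.algebraMap_mem_iff 𝕜).mpr hx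
  calc |x| = ‖(x : 𝕜)‖ := (RCLike.norm_ofReal x).symm
    _ ≤ ‖toEuclideanCLM (𝕜 := 𝕜) A‖ * ‖(1 : EuclideanSpace 𝕜 m →L[𝕜] EuclideanSpace 𝕜 m)‖ :=
        spectrum.norm_le_norm_mul_of_mem hx𝕜
    _ ≤ ‖toEuclideanCLM (𝕜 := 𝕜) A‖ :=
        mul_le_of_le_one_right (norm_nonneg _) ContinuousLinearMap.norm_id_le

lemma Matrix.PosSemidef.spectrum_subset_Icc {A : Matrix m m 𝕜} (hA : A.PosSemidef) :
    spectrum ℝ A ⊆ Icc 0 ‖toEuclideanCLM (𝕜 := 𝕜) A‖ := fun x hx =>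
  ⟨spectrum_nonneg_of_nonneg hA.nonneg hx,
    (le_abs_self x).trans (abs_le_norm_toEuclideanCLM_of_mem_spectrum hx)⟩

end Spectrum

section Resolvent

variable {n : ℕ} {X : Matrix (Fin n) (Fin n) ℂ} {t : ℝ}

lemma resolventGap_eq_cfc (hX : IsSelfAdjoint X) (ht : -t ∉ spectrum ℝ X) :
    resolventGap t X = cfc (fun x => 1 / t - 1 / (t + x)) X := by
  have hne : ∀ x ∈ spectrum ℝ X, t + x ≠ 0 := fun x hx h => ht (by rwa [show -t = x by linarith])
  have hshift : t • (1 : Matrix (Fin n) (Fin n) ℂ) + X = cfc (fun x => t + x) X := by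
    rw [cfc_const_add t (fun x => x) X, cfc_id' ℝ X, Algebra.algebraMap_eq_smul_one]
  rw [resolventGap, nonsing_inv_eq_ringInverse, hshift, ← cfc_inv _ X hne]
  simp only [one_div]
  rw [cfc_sub (fun _ => t⁻¹) (fun x => (t + x)⁻¹) X (hg := X.finite_real_spectrum.continuousOn _),
    cfc_const t⁻¹ X, Algebra.algebraMap_eq_smul_one]

end Resolvent

section Integral

attribute [local instance] Matrix.frobeniusNormedRing Matrix.frobeniusNormedAlgebra

lemma setIntegral_rpow_smul_resolventGap {n : ℕ} {X : Matrix (Fin n) (Fin n) ℂ} {T β : ℝ}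
    (hX : X.PosSemidef) (hT : 0 < T) (hβ : β < 1) :
    ∫ t in Ioi T, t ^ β • resolventGap t X =
      cfc (fun x => ∫ t in Ioi T, t ^ β * (1 / t - 1 / (t + x))) X := by
  have hspec := hX.spectrum_subset_Icc
  have hcfc : EqOn (fun t => t ^ β • resolventGap t X)
      (fun t => cfc (fun x => t ^ β * (1 / t - 1 / (t + x))) X) (Ioi T) := fun t ht => by
    have ht : 0 < t := hT.trans ht
    dsimp only
    rw [resolventGap_eq_cfc hX.isHermitian.isSelfAdjoint fun h => by linarith [(hspec h).1],
      ← cfc_const_mul _ _ _ (X.finite_real_spectrum.continuousOn _)]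
  rw [setIntegral_congr_fun measurableSet_Ioi hcfc]
  -- The Frobenius topology is not reducibly the product topology, so instance search cannot find
  -- the matrix functional calculus here and it is supplied by hand.
  refine (@cfc_setIntegral ℝ ℝ _ IsSelfAdjoint _ _ volume _ _ _
    IsHermitian.instContinuousFunctionalCalculus _ _ _ _ _ measurableSet_Ioi _
    (fun t => ‖toEuclideanCLM (𝕜 := ℂ) X‖ * t ^ (β - 2)) X _ ?_ ?_ ?_ hX.isHermitian).symm
  · rintro ⟨t, x⟩ ⟨ht, hx⟩
    have ht : 0 < t := hT.trans ht
    have ht0 : t ≠ 0 := ht.ne'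
    have htx : t + x ≠ 0 := by linarith [(hspec hx).1]
    exact ContinuousAt.continuousWithinAt <| by
      simp only [Function.uncurry_def]
      fun_prop (disch := first | assumption | exact Or.inl ht0)
  · filter_upwards [ae_restrict_mem measurableSet_Ioi] with t ht x hx
    have ht : 0 < t := hT.trans ht
    rw [Real.norm_of_nonneg (rpow_mul_one_div_sub_nonneg ht (hspec hx).1)]
    exact (rpow_mul_one_div_sub_le ht (hspec hx).1).trans
      (mul_le_mul_of_nonneg_right (hspec hx).2 (Real.rpow_nonneg ht.le _))
  · exact ((integrableOn_Ioi_rpow_of_lt (show β - 2 < -1 by linarith) hT).const_mul _).2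

end Integral

/-- For a positive semidefinite `X`, `T > 0` and `β ∈ (0,1)`, the Loewner-order inequality
`∫_T^∞ t^β ( (1/t)·I − (tI + X)⁻¹ ) dt ≤ ( ‖X‖ / ((1−β)·T^{1−β}) )·I` holds, where `‖X‖` is
the operator norm of `X`. -/
theorem stmt_8 {n : ℕ} (X : Matrix (Fin n) (Fin n) ℂ) (hX : X.PosSemidef)
    (T β : ℝ) (hT : 0 < T) (hβ : β ∈ Set.Ioo (0 : ℝ) 1) :
    ((‖Matrix.toEuclideanCLM (𝕜 := ℂ) X‖ / ((1 - β) * T ^ (1 - β))) •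
        (1 : Matrix (Fin n) (Fin n) ℂ) -
      ∫ t in Set.Ioi T, t ^ β • resolventGap t X).PosSemidef := by
  rw [setIntegral_rpow_smul_resolventGap hX hT hβ.2, ← Matrix.le_iff,
    ← Algebra.algebraMap_eq_smul_one]
  refine cfc_le_algebraMap _ _ X (fun x hx => ?_) (X.finite_real_spectrum.continuousOn _)
  obtain ⟨hx0, hxX⟩ := hX.spectrum_subset_Icc hx
  exact (setIntegral_rpow_mul_one_div_sub_le hT hβ.2 hx0).trans
    (div_le_div_of_nonneg_right hxX (mul_pos (sub_pos.2 hβ.2) (Real.rpow_pos_of_pos hT _)).le)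
end

section
/- For every positive definite matrix X and β ∈ (0,1), X^β = (sin(βπ)/π) · ∫₀^∞ t^β ( (1/t)·I − (tI + X)^{-1} ) dt. -/
open Matrix
open MeasureTheory Set
open scoped ComplexOrder Real

attribute [local instance] Matrix.frobeniusNormedAddCommGroup Matrix.frobeniusNormedSpace


-- Step 1: beta value on Ioo 0 1
lemma beta_real {β : ℝ} (hβ : β ∈ Set.Ioo (0:ℝ) 1) :
    IntegrableOn (fun x : ℝ => x ^ (β-1) * (1-x) ^ (-β)) (Ioo 0 1) ∧
    ∫ x in Ioo (0:ℝ) 1, x ^ (β-1) * (1-x) ^ (-β) = π / Real.sin (π * β) := by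
  obtain ⟨hβ0, hβ1⟩ := hβ
  have key : ∀ x ∈ Set.uIcc (0:ℝ) 1,
      ((x:ℂ) ^ ((β:ℂ)-1) * (1-(x:ℂ)) ^ (((1:ℂ)-β)-1)) = ((x ^ (β-1) * (1-x) ^ (-β) : ℝ) : ℂ) := by
    intro x hx
    rw [Set.uIcc_of_le (by norm_num : (0:ℝ) ≤ 1)] at hx
    have hx0 : 0 ≤ x := hx.1
    have hx1 : 0 ≤ 1 - x := by linarith [hx.2]
    rw [Complex.ofReal_mul, Complex.ofReal_cpow hx0, Complex.ofReal_cpow hx1]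
    push_cast
    ring_nf
  have h1β : (0:ℝ) < 1 - β := by linarith
  have hconv : IntervalIntegrable
      (fun x : ℝ => (x:ℂ) ^ ((β:ℂ)-1) * (1-(x:ℂ)) ^ (((1:ℂ)-β)-1)) volume 0 1 := by
    have := Complex.betaIntegral_convergent (u := (β:ℂ)) (v := 1-(β:ℂ))
      (by simpa using hβ0) (by simpa using h1β)
    simpa using this
  have hbeta : Complex.betaIntegral (β:ℂ) (1-(β:ℂ)) = (π:ℂ) / Complex.sin (π * β) := by
    have h2 := Complex.Gamma_mul_Gamma_eq_betaIntegral (s := (β:ℂ)) (t := 1-(β:ℂ))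
      (by simpa using hβ0) (by simpa using h1β)
    rw [add_sub_cancel, Complex.Gamma_one, one_mul] at h2
    rw [← h2, Complex.Gamma_mul_Gamma_one_sub]
  have hbeta2 : ((∫ x in (0:ℝ)..1, x ^ (β-1) * (1-x) ^ (-β) : ℝ) : ℂ)
      = ((π / Real.sin (π * β) : ℝ) : ℂ) := by
    rw [← intervalIntegral.integral_ofReal]
    rw [← intervalIntegral.integral_congr key]
    rw [show (fun x : ℝ => (x:ℂ) ^ ((β:ℂ)-1) * (1-(x:ℂ)) ^ (((1:ℂ)-β)-1))
        = fun x : ℝ => (x:ℂ) ^ ((β:ℂ)-1) * (1-(x:ℂ)) ^ ((1-(β:ℂ))-1) by norm_num]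
    rw [← Complex.betaIntegral, hbeta]
    push_cast [Complex.ofReal_sin]
    ring_nf
  have hval : ∫ x in (0:ℝ)..1, x ^ (β-1) * (1-x) ^ (-β) = π / Real.sin (π * β) :=
    Complex.ofReal_inj.mp hbeta2
  have hIoc : IntegrableOn
      (fun x : ℝ => (x:ℂ) ^ ((β:ℂ)-1) * (1-(x:ℂ)) ^ (((1:ℂ)-β)-1)) (Ioc 0 1) :=
    (intervalIntegrable_iff_integrableOn_Ioc_of_le (by norm_num)).mp hconv
  have hIntR : IntegrableOn (fun x : ℝ => x ^ (β-1) * (1-x) ^ (-β)) (Ioo 0 1) := by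
    refine IntegrableOn.congr_fun ((hIoc.mono_set Ioo_subset_Ioc_self).re) ?_ measurableSet_Ioo
    intro x hx
    have hx' : x ∈ Set.uIcc (0:ℝ) 1 := by
      rw [Set.uIcc_of_le (by norm_num : (0:ℝ) ≤ 1)]
      exact ⟨hx.1.le, hx.2.le⟩
    have := key x hx'
    simp only [this, RCLike.re_to_complex, Complex.ofReal_re]
  refine ⟨hIntR, ?_⟩
  rw [← integral_Ioc_eq_integral_Ioo, ← intervalIntegral.integral_of_le (by norm_num : (0:ℝ) ≤ 1)]
  exact hval

lemma J_val {β : ℝ} (hβ : β ∈ Set.Ioo (0:ℝ) 1) :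
    IntegrableOn (fun u : ℝ => u ^ (β-1) * (1+u)⁻¹) (Ioi 0) ∧
    ∫ u in Ioi (0:ℝ), u ^ (β-1) * (1+u)⁻¹ = π / Real.sin (π * β) := by
  obtain ⟨hb, hIv⟩ := beta_real hβ
  set φ : ℝ → ℝ := fun u => u / (1+u) with hφ
  set φ' : ℝ → ℝ := fun u => ((1+u)^2)⁻¹ with hφ'
  have hderiv : ∀ u ∈ Ioi (0:ℝ), HasDerivWithinAt φ (φ' u) (Ioi 0) u := by
    intro u hu
    have hu0 : (0:ℝ) < u := hu
    have h1u : (1+u) ≠ 0 := by positivity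
    have : HasDerivAt φ ((1*(1+u) - u*(0+1))/(1+u)^2) u :=
      (hasDerivAt_id u).div ((hasDerivAt_const u 1).add (hasDerivAt_id u)) h1u
    refine this.hasDerivWithinAt.congr_deriv ?_
    simp only [hφ']; ring
  have hinj : InjOn φ (Ioi 0) := by
    intro a ha b hb' h
    have ha0 : (0:ℝ) < a := ha
    have hb0 : (0:ℝ) < b := hb'
    have h1a : (1+a) ≠ 0 := by positivity
    have h1b : (1+b) ≠ 0 := by positivity
    rw [hφ, div_eq_div_iff h1a h1b] at h
    nlinarith [h]
  have himg : φ '' (Ioi 0) = Ioo 0 1 := by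
    ext y
    constructor
    · rintro ⟨u, hu, rfl⟩
      have hu0 : (0:ℝ) < u := hu
      have h1u : (0:ℝ) < 1+u := by linarith
      constructor
      · positivity
      · rw [div_lt_one h1u]; linarith
    · rintro ⟨hy0, hy1⟩
      refine ⟨y / (1-y), ?_, ?_⟩
      · have : (0:ℝ) < 1 - y := by linarith
        exact div_pos hy0 this
      · have h1y : (1:ℝ) - y ≠ 0 := by intro h; rw [sub_eq_zero] at h; linarith [h.symm]
        simp only [hφ]; field_simp; ring
  have hcomp : ∀ u ∈ Ioi (0:ℝ),
      |φ' u| • (φ u ^ (β-1) * (1 - φ u) ^ (-β)) = u ^ (β-1) * (1+u)⁻¹ := by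
    intro u hu
    have hu0 : (0:ℝ) < u := hu
    have h1u : (0:ℝ) < 1+u := by linarith
    have h1 : 1 - φ u = (1+u)⁻¹ := by simp only [hφ]; field_simp; ring
    have h2 : φ u ^ (β-1) = u ^ (β-1) / (1+u) ^ (β-1) := Real.div_rpow hu0.le h1u.le (β-1)
    have h3 : ((1+u):ℝ)⁻¹ ^ (-β) = (1+u) ^ β := by
      rw [Real.inv_rpow h1u.le, Real.rpow_neg h1u.le, inv_inv]
    have h4 : |φ' u| = ((1+u)^2)⁻¹ := by
      rw [hφ']; rw [abs_of_pos]; positivity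
    rw [h1, h2, h3, h4, smul_eq_mul]
    have h6 : ((1:ℝ)+u) ^ β = (1+u) ^ (β-1) * (1+u) := by
      rw [← Real.rpow_add_one h1u.ne' (β-1)]
      norm_num
    have hne1 : ((1:ℝ)+u) ^ (β-1) ≠ 0 := by positivity
    rw [h6]
    field_simp
  have hIffInt := integrableOn_image_iff_integrableOn_abs_deriv_smul
    measurableSet_Ioi hderiv hinj (fun x => x ^ (β-1) * (1-x) ^ (-β))
  rw [himg] at hIffInt
  have hIntImg : IntegrableOn (fun u => |φ' u| • (φ u ^ (β-1) * (1 - φ u) ^ (-β))) (Ioi 0) :=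
    hIffInt.mp hb
  have hIEq := integral_image_eq_integral_abs_deriv_smul
    measurableSet_Ioi hderiv hinj (fun x => x ^ (β-1) * (1-x) ^ (-β))
  rw [himg] at hIEq
  constructor
  · exact IntegrableOn.congr_fun hIntImg hcomp measurableSet_Ioi
  · rw [← setIntegral_congr_fun measurableSet_Ioi hcomp, ← hIEq, hIv]

lemma scalar_int {β x : ℝ} (hβ : β ∈ Set.Ioo (0:ℝ) 1) (hx : 0 < x) :
    IntegrableOn (fun t : ℝ => t ^ β * (1/t - (t+x)⁻¹)) (Ioi 0) ∧
    ∫ t in Ioi (0:ℝ), t ^ β * (1/t - (t+x)⁻¹) = (π / Real.sin (π * β)) * x ^ β := by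
  obtain ⟨hJint, hJval⟩ := J_val hβ
  set g : ℝ → ℝ := fun t => t ^ β * (1/t - (t+x)⁻¹) with hg
  have hcomp : ∀ u ∈ Ioi (0:ℝ), g (x*u) = x ^ (β-1) * (u ^ (β-1) * (1+u)⁻¹) := by
    intro u hu
    have hu0 : (0:ℝ) < u := hu
    have h1u : (0:ℝ) < 1+u := by linarith
    have hxu : (0:ℝ) < x*u := mul_pos hx hu0
    rw [hg]
    simp only
    rw [Real.mul_rpow hx.le hu0.le]
    have hxb : x ^ β = x ^ (β-1) * x := by
      rw [← Real.rpow_add_one hx.ne' (β-1)]; norm_num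
    have hub : u ^ β = u ^ (β-1) * u := by
      rw [← Real.rpow_add_one hu0.ne' (β-1)]; norm_num
    rw [hxb, hub]
    have hx0 : x ≠ 0 := hx.ne'
    have hu0' : u ≠ 0 := hu0.ne'
    have h1u' : (1+u) ≠ 0 := h1u.ne'
    have hxux : x*u + x ≠ 0 := by nlinarith
    field_simp
    ring
  have hint : IntegrableOn g (Ioi 0) := by
    have h1 : IntegrableOn (fun u => g (x*u)) (Ioi 0) := by
      refine IntegrableOn.congr_fun ?_ (fun u hu => (hcomp u hu).symm) measurableSet_Ioi
      exact (hJint.const_mul _)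
    have := (integrableOn_Ioi_comp_mul_left_iff g 0 hx).mp h1
    simpa using this
  refine ⟨hint, ?_⟩
  have hscale := integral_comp_mul_left_Ioi g 0 hx
  rw [mul_zero] at hscale
  rw [setIntegral_congr_fun measurableSet_Ioi hcomp] at hscale
  rw [MeasureTheory.integral_const_mul, hJval] at hscale
  -- hscale : x^(β-1) * (π / sin (πβ)) = x⁻¹ • ∫ t in Ioi 0, g t
  have hxb : x ^ β = x ^ (β-1) * x := by
    rw [← Real.rpow_add_one hx.ne' (β-1)]; norm_num
  rw [smul_eq_mul] at hscale
  have : ∫ t in Ioi (0:ℝ), g t = x * (x ^ (β-1) * (π / Real.sin (π * β))) := by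
    rw [hscale, ← mul_assoc, mul_inv_cancel₀ hx.ne', one_mul]
  rw [this, hxb]; ring


/-- `X^β` for a Hermitian (positive semidefinite) matrix via the continuous functional
calculus. -/
noncomputable def mpow {n : ℕ} (X : Matrix (Fin n) (Fin n) ℂ) (β : ℝ) :
    Matrix (Fin n) (Fin n) ℂ :=
  cfc (fun x : ℝ => x ^ β) X

/-- For every positive definite matrix `X` and `β ∈ (0,1)`,
`X^β = (sin(βπ)/π) · ∫₀^∞ t^β ( (1/t)·I − (tI + X)⁻¹ ) dt`. -/
theorem stmt_10 {n : ℕ} (X : Matrix (Fin n) (Fin n) ℂ) (hX : X.PosDef)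
    (β : ℝ) (hβ : β ∈ Set.Ioo (0 : ℝ) 1) :
    mpow X β = (Real.sin (β * π) / π) •
      ∫ t in Set.Ioi (0 : ℝ), t ^ β •
        ((1 / t : ℝ) • (1 : Matrix (Fin n) (Fin n) ℂ) -
          (t • (1 : Matrix (Fin n) (Fin n) ℂ) + X)⁻¹) := by
  have hH : X.IsHermitian := hX.1
  set U : Matrix (Fin n) (Fin n) ℂ :=
    (Matrix.IsHermitian.eigenvectorUnitary hH : Matrix (Fin n) (Fin n) ℂ) with hU
  set e : Fin n → ℝ := hH.eigenvalues with he
  have hepos : ∀ i, 0 < e i := fun i => hX.eigenvalues_pos i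
  have hU1 : U * star U = 1 :=
    (Matrix.mem_unitaryGroup_iff).mp (Matrix.IsHermitian.eigenvectorUnitary hH).2
  have hU2 : star U * U = 1 :=
    (Matrix.mem_unitaryGroup_iff').mp (Matrix.IsHermitian.eigenvectorUnitary hH).2
  set P : Fin n → Matrix (Fin n) (Fin n) ℂ :=
    fun i => U * Matrix.diagonal (Pi.single i (1:ℂ)) * star U with hP
  have hdiag_sum : ∀ v : Fin n → ℝ,
      Matrix.diagonal (fun i => ((v i : ℝ) : ℂ)) =
      ∑ i, v i • Matrix.diagonal (Pi.single i (1:ℂ)) := by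
    intro v
    ext j k
    simp [Matrix.diagonal_apply, Matrix.sum_apply, Pi.single_apply, apply_ite,
      Finset.sum_ite_eq, Complex.real_smul]
    split_ifs with h <;> tauto
  have hconj : ∀ v : Fin n → ℝ,
      U * Matrix.diagonal (fun i => ((v i : ℝ) : ℂ)) * star U = ∑ i, v i • P i := by
    intro v
    rw [hdiag_sum v, Finset.mul_sum, Finset.sum_mul]
    simp only [Matrix.mul_smul, Matrix.smul_mul, hP]
  have hspec : X = U * Matrix.diagonal (fun i => ((e i : ℝ) : ℂ)) * star U := by
    have h := hH.spectral_theorem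
    rw [Unitary.conjStarAlgAut_apply] at h
    exact h
  -- real smul is complex smul
  have hrsmul : ∀ (t : ℝ) (M : Matrix (Fin n) (Fin n) ℂ), t • M = (t : ℂ) • M := by
    intro t M
    ext j k
    simp [Complex.real_smul]
  have hconj_const : ∀ c : ℝ, (c : ℝ) • (1 : Matrix (Fin n) (Fin n) ℂ) =
      U * Matrix.diagonal (fun _ : Fin n => ((c : ℝ) : ℂ)) * star U := by
    intro c
    rw [← Matrix.smul_one_eq_diagonal, Matrix.mul_smul, Matrix.smul_mul, mul_one, hU1,
      hrsmul]
  -- resolvent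
  have hsum : ∀ t : ℝ, t • (1 : Matrix (Fin n) (Fin n) ℂ) + X =
      U * Matrix.diagonal (fun i => ((t + e i : ℝ) : ℂ)) * star U := by
    intro t
    rw [hconj_const t, hspec, ← Matrix.add_mul, ← Matrix.mul_add, Matrix.diagonal_add]
    push_cast
    rfl
  have hmulconj : ∀ d d' : Fin n → ℂ,
      (U * Matrix.diagonal d * star U) * (U * Matrix.diagonal d' * star U) =
      U * Matrix.diagonal (fun i => d i * d' i) * star U := by
    intro d d'
    have haux : star U * (U * (Matrix.diagonal d' * star U)) = Matrix.diagonal d' * star U := by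
      rw [← mul_assoc, hU2, one_mul]
    simp only [mul_assoc, haux]
    rw [← mul_assoc (Matrix.diagonal d), Matrix.diagonal_mul_diagonal]
  have hinv : ∀ t : ℝ, 0 < t →
      (t • (1 : Matrix (Fin n) (Fin n) ℂ) + X)⁻¹ =
      U * Matrix.diagonal (fun i => (((t + e i)⁻¹ : ℝ) : ℂ)) * star U := by
    intro t ht
    apply Matrix.inv_eq_right_inv
    rw [hsum t, hmulconj]
    have : (fun i => ((t + e i : ℝ) : ℂ) * (((t + e i)⁻¹ : ℝ) : ℂ)) = fun _ => (1:ℂ) := by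
      funext i
      have hpos : (0:ℝ) < t + e i := by linarith [hepos i]
      rw [← Complex.ofReal_mul, mul_inv_cancel₀ hpos.ne']
      norm_num
    rw [this, Matrix.diagonal_one, mul_one, hU1]
  -- the integrand as a finite sum
  have hF : ∀ t ∈ Ioi (0:ℝ),
      t ^ β • ((1 / t : ℝ) • (1 : Matrix (Fin n) (Fin n) ℂ) -
          (t • (1 : Matrix (Fin n) (Fin n) ℂ) + X)⁻¹) =
      ∑ i, (t ^ β * (1/t - (t + e i)⁻¹)) • P i := by
    intro t ht
    have ht0 : (0:ℝ) < t := ht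
    rw [hinv t ht0, hconj_const (1/t)]
    rw [← Matrix.sub_mul, ← Matrix.mul_sub, Matrix.diagonal_sub]
    have : (fun i => (((1/t : ℝ)) : ℂ) - (((t + e i)⁻¹ : ℝ) : ℂ))
        = fun i => (((1/t - (t + e i)⁻¹ : ℝ)) : ℂ) := by
      funext i; push_cast; ring
    rw [this, hconj, Finset.smul_sum]
    congr 1
    funext i
    rw [smul_smul]
  -- eigenvalue form of mpow
  have hmpow : mpow X β = ∑ i, (e i ^ β) • P i := by
    rw [mpow, hH.cfc_eq, Matrix.IsHermitian.cfc]
    rw [← hconj]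
    congr 2
  -- integrability of components
  have hint : ∀ i : Fin n, IntegrableOn
      (fun t : ℝ => t ^ β * (1/t - (t + e i)⁻¹)) (Ioi 0) :=
    fun i => (scalar_int hβ (hepos i)).1
  have hval : ∀ i : Fin n, ∫ t in Ioi (0:ℝ), t ^ β * (1/t - (t + e i)⁻¹)
      = (π / Real.sin (π * β)) * e i ^ β :=
    fun i => (scalar_int hβ (hepos i)).2
  -- compute the integral
  have hIeq : (∫ t in Set.Ioi (0 : ℝ), t ^ β •
        ((1 / t : ℝ) • (1 : Matrix (Fin n) (Fin n) ℂ) -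
          (t • (1 : Matrix (Fin n) (Fin n) ℂ) + X)⁻¹))
      = ∑ i, ((π / Real.sin (π * β)) * e i ^ β) • P i := by
    rw [setIntegral_congr_fun measurableSet_Ioi hF]
    rw [integral_finset_sum _ (fun i _ => ((hint i).smul_const (P i)))]
    congr 1
    funext i
    rw [integral_smul_const, hval i]
  rw [hmpow, hIeq, Finset.smul_sum]
  have hsin : Real.sin (β * π) ≠ 0 := by
    have h0 : 0 < β * π := by
      have := Real.pi_pos
      exact mul_pos hβ.1 this
    have h1 : β * π < π := by
      nlinarith [Real.pi_pos, hβ.2]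
    exact (Real.sin_pos_of_pos_of_lt_pi h0 h1).ne'
  congr 1
  funext i
  rw [smul_smul]
  congr 1
  rw [mul_comm π β]
  field_simp
end
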